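/- Let A₁, B₁ be join-semilattices and A₂, B₂ be meet-semilattices, with B₁ having a top element 1 and B₂ a bottom element 0. Equip A₁ × A₂ and B₁ × B₂ with the operation (a₁,a₂) ⊻ (a₁',a₂') = (a₁ ∨ a₁', a₂ ∧ a₂'). Let B be a subsemilattice of B₁ × B₂ containing (b₁,0) and (1,b₂) for all b₁ ∈ B₁, b₂ ∈ B₂. Then for any semilattice homomorphism Φ : B → A₁ × A₂, the first component π₁(Φ(b₁,b₂)) does not depend on b₂ and the second component π₂(Φ(b₁,b₂)) does not depend on b₁; hence Φ(b₁,b₂) = (Φ₁(b₁), Φ₂(b₂)) where Φ₁(b₁) = π₁(Φ(b₁,0)) and Φ₂(b₂) = π₂(Φ(1,b₂)). -/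
import Mathlib


theorem mixed_product_hom_decomposition
    {A₁ A₂ B₁ B₂ : Type*} [SemilatticeSup A₁] [SemilatticeInf A₂]
    [SemilatticeSup B₁] [OrderTop B₁] [SemilatticeInf B₂] [OrderBot B₂]
    (B : Set (B₁ × B₂))
    (hBop : ∀ p ∈ B, ∀ q ∈ B, (p.1 ⊔ q.1, p.2 ⊓ q.2) ∈ B)
    (hB0 : ∀ b₁ : B₁, (b₁, (⊥ : B₂)) ∈ B)
    (hB1 : ∀ b₂ : B₂, ((⊤ : B₁), b₂) ∈ B)
    (Φ : B₁ × B₂ → A₁ × A₂)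
    (hhom : ∀ p ∈ B, ∀ q ∈ B,
      Φ (p.1 ⊔ q.1, p.2 ⊓ q.2) = ((Φ p).1 ⊔ (Φ q).1, (Φ p).2 ⊓ (Φ q).2))
    (hmono : ∀ p ∈ B, ∀ q ∈ B, p ≤ q → Φ p ≤ Φ q) :
    (∀ p ∈ B, ∀ q ∈ B, p.1 = q.1 → (Φ p).1 = (Φ q).1) ∧
    (∀ p ∈ B, ∀ q ∈ B, p.2 = q.2 → (Φ p).2 = (Φ q).2) ∧
    (∀ p ∈ B, Φ p = ((Φ (p.1, (⊥ : B₂))).1, (Φ ((⊤ : B₁), p.2)).2)) := by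
  have h1 : ∀ p ∈ B, ∀ q ∈ B, p.1 = q.1 → (Φ p).1 = (Φ q).1 := by
    have key : ∀ p ∈ B, ∀ q ∈ B, p.1 = q.1 → (Φ q).1 ≤ (Φ p).1 := by
      intro p hp q hq hpq
      have hr : (p.1 ⊔ q.1, p.2 ⊓ q.2) ∈ B := hBop p hp q hq
      have hle : (p.1 ⊔ q.1, p.2 ⊓ q.2) ≤ p := by
        constructor
        · simp [hpq]
        · exact inf_le_left
      have hm := (hmono _ hr p hp hle).1
      have hh := congrArg Prod.fst (hhom p hp q hq)
      simp only at hh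
      rw [hh] at hm
      exact le_trans le_sup_right hm
    intro p hp q hq hpq
    exact le_antisymm (key q hq p hp hpq.symm) (key p hp q hq hpq)
  have h2 : ∀ p ∈ B, ∀ q ∈ B, p.2 = q.2 → (Φ p).2 = (Φ q).2 := by
    have key : ∀ p ∈ B, ∀ q ∈ B, p.2 = q.2 → (Φ p).2 ≤ (Φ q).2 := by
      intro p hp q hq hpq
      have hr : (p.1 ⊔ q.1, p.2 ⊓ q.2) ∈ B := hBop p hp q hq
      have hle : p ≤ (p.1 ⊔ q.1, p.2 ⊓ q.2) := by
        constructor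
        · exact le_sup_left
        · simp [hpq]
      have hm := (hmono p hp _ hr hle).2
      have hh := congrArg Prod.snd (hhom p hp q hq)
      simp only at hh
      rw [hh] at hm
      exact le_trans hm inf_le_right
    intro p hp q hq hpq
    exact le_antisymm (key p hp q hq hpq) (key q hq p hp hpq.symm)
  refine ⟨h1, h2, fun p hp => ?_⟩
  have e1 := h1 p hp (p.1, ⊥) (hB0 p.1) rfl
  have e2 := h2 p hp (⊤, p.2) (hB1 p.2) rfl
  exact Prod.ext e1 e2
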